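/- Let h > 0, g ∈ ℝ, let a₁ ≠ a₂ be real numbers, and let c₁, c₂ ∈ ℂ with c₁ + c₂ ≠ 0. Define ψ_h(x) := (π h²)^(-1/4) * Real.exp(-x²/(2h²)) and Ψ(x) := c₁ • ψ_h(x - g*a₁) + c₂ • ψ_h(x - g*a₂). Set Λm := (a₁+a₂)/2, Λr := (a₂-a₁)/2, A_w := (a₁•c₁ + a₂•c₂)/(c₁+c₂), A⁰ := A_w - Λm, amp := (‖A⁰‖²/Λr² - 1)/2, and E := Real.exp(-g²Λr²/h²). Assume ∫ ‖Ψ(x)‖² dx ≠ 0 (equivalently 1 + amp*(1 - E) ≠ 0). Then the conditional expectation of position is (∫ x * ‖Ψ(x)‖² dx) / (∫ ‖Ψ(x)‖² dx) = g * (A⁰.re) / (1 + amp*(1 - E)) + g*Λm. -/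

import Mathlib

/-!
The product of two translates `ψ_h(x - b₁) ψ_h(x - b₂)` of the Gaussian is the overlap factor
`exp (-(b₁ - b₂)² / 4h²)` times the normal density of variance `h² / 2` centred at `(b₁ + b₂) / 2`.
Hence `‖Ψ‖²` is a combination of three normal densities, and its mass and first moment are read
off from their weights and means. The weak value enters only through
`A⁰ (c₁ + c₂) = Λr (c₂ - c₁)`, which expresses `‖c₁ + c₂‖² Re A⁰` and
`‖c₁ + c₂‖² (1 + amp (1 - E))` through `‖c₁‖²`, `‖c₂‖²` and `Re (c₁ c̄₂)`.
-/

open MeasureTheory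

/-- The normalised Gaussian wave function of width `h`:
`psih h x = (π h²)^(-1/4) * exp (-x²/(2h²))`. -/
noncomputable def psih (h x : ℝ) : ℝ :=
  (Real.pi * h ^ 2) ^ (-(1 / 4) : ℝ) * Real.exp (-x ^ 2 / (2 * h ^ 2))

open ProbabilityTheory
open scoped NNReal

namespace ProbabilityTheory

lemma integrable_mul_gaussianPDFReal (μ : ℝ) (v : ℝ≥0) :
    Integrable (fun x => x * gaussianPDFReal μ v x) := by
  rcases eq_or_ne v 0 with rfl | hv
  · simp
  have := (memLp_id_gaussianReal (μ := μ) (v := v) 1).integrable le_rfl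
  rw [gaussianReal_of_var_ne_zero _ hv, integrable_withDensity_iff_integrable_smul'
    (measurable_gaussianPDF μ v) (ae_of_all _ fun _ => gaussianPDF_lt_top)] at this
  simpa [toReal_gaussianPDF, mul_comm] using this

lemma integral_mul_gaussianPDFReal (μ : ℝ) {v : ℝ≥0} (hv : v ≠ 0) :
    ∫ x, x * gaussianPDFReal μ v x = μ := by
  simpa [mul_comm, integral_gaussianReal_eq_integral_smul hv] using
    integral_id_gaussianReal (μ := μ) (v := v)

section Mixture

variable {ι : Type*} (s : Finset ι) (w μ : ι → ℝ) {v : ℝ≥0}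

lemma integral_sum_mul_gaussianPDFReal (hv : v ≠ 0) :
    ∫ x, ∑ i ∈ s, w i * gaussianPDFReal (μ i) v x = ∑ i ∈ s, w i := by
  rw [integral_finsetSum _ fun i _ => (integrable_gaussianPDFReal _ _).const_mul _]
  simp [integral_const_mul, integral_gaussianPDFReal_eq_one _ hv]

lemma integral_mul_sum_mul_gaussianPDFReal (hv : v ≠ 0) :
    ∫ x, x * ∑ i ∈ s, w i * gaussianPDFReal (μ i) v x = ∑ i ∈ s, w i * μ i := by
  simp_rw [Finset.mul_sum, mul_left_comm _ (w _)]
  rw [integral_finsetSum _ fun i _ => (integrable_mul_gaussianPDFReal _ _).const_mul _]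
  simp [integral_const_mul, integral_mul_gaussianPDFReal _ hv]

end Mixture

end ProbabilityTheory

lemma psih_mul_psih {h : ℝ} (hh : h ≠ 0) (b₁ b₂ x : ℝ) :
    psih h (x - b₁) * psih h (x - b₂) = Real.exp (-(b₁ - b₂) ^ 2 / (4 * h ^ 2)) *
      gaussianPDFReal ((b₁ + b₂) / 2) (‖h‖₊ ^ 2 / 2) x := by
  have hv : ((‖h‖₊ ^ 2 / 2 : ℝ≥0) : ℝ) = h ^ 2 / 2 := by simp
  have hprefactor : (Real.pi * h ^ 2) ^ (-(1 / 4) : ℝ) * (Real.pi * h ^ 2) ^ (-(1 / 4) : ℝ)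
      = (Real.sqrt (2 * Real.pi * (h ^ 2 / 2)))⁻¹ := by
    rw [← Real.rpow_add (by positivity), Real.sqrt_eq_rpow, ← Real.rpow_neg (by positivity)]
    ring_nf
  have hexponent : -(x - b₁) ^ 2 / (2 * h ^ 2) + -(x - b₂) ^ 2 / (2 * h ^ 2)
      = -(b₁ - b₂) ^ 2 / (4 * h ^ 2) + -(x - (b₁ + b₂) / 2) ^ 2 / (2 * (h ^ 2 / 2)) := by
    field_simp
    ring
  rw [gaussianPDFReal, hv, psih, psih, mul_mul_mul_comm, hprefactor, ← Real.exp_add, hexponent,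
    Real.exp_add]
  ring

lemma norm_sq_add_mul_ofReal (c₁ c₂ : ℂ) (r₁ r₂ : ℝ) :
    ‖c₁ * r₁ + c₂ * r₂‖ ^ 2 = ‖c₁‖ ^ 2 * (r₁ * r₁) + ‖c₂‖ ^ 2 * (r₂ * r₂)
      + 2 * (c₁ * starRingEnd ℂ c₂).re * (r₁ * r₂) := by
  have hcross : c₁ * r₁ * starRingEnd ℂ (c₂ * r₂) = c₁ * starRingEnd ℂ c₂ * (r₁ * r₂ : ℝ) := by
    push_cast [map_mul, Complex.conj_ofReal]
    ring
  simp only [Complex.sq_norm, Complex.normSq_add, Complex.normSq_mul, Complex.normSq_ofReal,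
    hcross, Complex.re_mul_ofReal]
  ring

section Superposition

variable {h : ℝ} (hh : h ≠ 0) (c₁ c₂ : ℂ) (b₁ b₂ : ℝ)
include hh

lemma norm_sq_superposition (x : ℝ) :
    ‖c₁ * psih h (x - b₁) + c₂ * psih h (x - b₂)‖ ^ 2 =
      ∑ i, ![‖c₁‖ ^ 2, ‖c₂‖ ^ 2,
          2 * (c₁ * starRingEnd ℂ c₂).re * Real.exp (-(b₁ - b₂) ^ 2 / (4 * h ^ 2))] i *
        gaussianPDFReal (![b₁, b₂, (b₁ + b₂) / 2] i) (‖h‖₊ ^ 2 / 2) x := by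
  rw [norm_sq_add_mul_ofReal, psih_mul_psih hh, psih_mul_psih hh, psih_mul_psih hh]
  simp [Fin.sum_univ_three]
  ring

lemma integral_norm_sq_superposition :
    ∫ x, ‖c₁ * psih h (x - b₁) + c₂ * psih h (x - b₂)‖ ^ 2 = ‖c₁‖ ^ 2 + ‖c₂‖ ^ 2
      + 2 * (c₁ * starRingEnd ℂ c₂).re * Real.exp (-(b₁ - b₂) ^ 2 / (4 * h ^ 2)) := by
  simp_rw [norm_sq_superposition hh]
  rw [integral_sum_mul_gaussianPDFReal _ _ _ (by simpa using hh)]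
  simp [Fin.sum_univ_three]

lemma integral_mul_norm_sq_superposition :
    ∫ x, x * ‖c₁ * psih h (x - b₁) + c₂ * psih h (x - b₂)‖ ^ 2 = ‖c₁‖ ^ 2 * b₁ + ‖c₂‖ ^ 2 * b₂
      + 2 * (c₁ * starRingEnd ℂ c₂).re * Real.exp (-(b₁ - b₂) ^ 2 / (4 * h ^ 2))
        * ((b₁ + b₂) / 2) := by
  simp_rw [norm_sq_superposition hh]
  rw [integral_mul_sum_mul_gaussianPDFReal _ _ _ (by simpa using hh)]
  simp [Fin.sum_univ_three]

end Superposition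

section WeakValue

variable {c₁ c₂ A₀ : ℂ} {Λr : ℝ}

lemma sub_midpoint_mul_add_eq (a₁ a₂ : ℝ) (hc : c₁ + c₂ ≠ 0) :
    ((a₁ • c₁ + a₂ • c₂) / (c₁ + c₂) - (((a₁ + a₂) / 2 : ℝ) : ℂ)) * (c₁ + c₂)
      = (((a₂ - a₁) / 2 : ℝ) : ℂ) * (c₂ - c₁) := by
  rw [sub_mul, div_mul_cancel₀ _ hc, Complex.real_smul, Complex.real_smul]
  push_cast
  ring

lemma re_mul_norm_sq_of_mul_add_eq (hA : A₀ * (c₁ + c₂) = Λr * (c₂ - c₁)) :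
    A₀.re * ‖c₁ + c₂‖ ^ 2 = Λr * (‖c₂‖ ^ 2 - ‖c₁‖ ^ 2) := by
  have hre := congrArg Complex.re hA
  have him := congrArg Complex.im hA
  simp only [Complex.mul_re, Complex.mul_im, Complex.add_re, Complex.add_im, Complex.sub_re,
    Complex.sub_im, Complex.ofReal_re, Complex.ofReal_im] at hre him
  simp only [Complex.sq_norm, Complex.normSq_apply, Complex.add_re, Complex.add_im]
  linear_combination (c₁.re + c₂.re) * hre + (c₁.im + c₂.im) * him

lemma norm_sq_add_mul_one_add_amp (hΛr : Λr ≠ 0) (hA : A₀ * (c₁ + c₂) = Λr * (c₂ - c₁))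
    (E : ℝ) : ‖c₁ + c₂‖ ^ 2 * (1 + (‖A₀‖ ^ 2 / Λr ^ 2 - 1) / 2 * (1 - E))
      = ‖c₁‖ ^ 2 + ‖c₂‖ ^ 2 + 2 * (c₁ * starRingEnd ℂ c₂).re * E := by
  have hnorm : ‖A₀‖ ^ 2 * ‖c₁ + c₂‖ ^ 2 = Λr ^ 2 * ‖c₂ - c₁‖ ^ 2 := by
    have := congrArg (‖·‖ ^ 2) hA
    simpa only [norm_mul, mul_pow, Complex.norm_real, Real.norm_eq_abs, sq_abs] using this
  have hadd : ‖c₁ + c₂‖ ^ 2 = ‖c₁‖ ^ 2 + ‖c₂‖ ^ 2 + 2 * (c₁ * starRingEnd ℂ c₂).re := by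
    simp only [Complex.sq_norm, Complex.normSq_add]
  have hsub : ‖c₂ - c₁‖ ^ 2 = ‖c₁‖ ^ 2 + ‖c₂‖ ^ 2 - 2 * (c₁ * starRingEnd ℂ c₂).re := by
    rw [norm_sub_rev]
    simp only [Complex.sq_norm, Complex.normSq_sub]
  field_simp
  linear_combination (1 - E) * hnorm + Λr ^ 2 * (1 + E) * hadd + Λr ^ 2 * (1 - E) * hsub

end WeakValue

/-- Exact full-order formula for the conditional expectation of the meter position
in the post-selected measurement of a dichotomic observable with Gaussian meter:
`(∫ x ‖Ψ‖²)/(∫ ‖Ψ‖²) = g Re(A⁰)/(1 + amp (1 - E)) + g Λm`. -/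
theorem stmt_17 (h g a₁ a₂ : ℝ) (hh : 0 < h) (ha : a₁ ≠ a₂)
    (c₁ c₂ : ℂ) (hc : c₁ + c₂ ≠ 0)
    (Ψ : ℝ → ℂ)
    (hΨ : Ψ = fun x => c₁ * ((psih h (x - g * a₁) : ℝ) : ℂ)
        + c₂ * ((psih h (x - g * a₂) : ℝ) : ℂ))
    (Λm Λr : ℝ) (hΛm : Λm = (a₁ + a₂) / 2) (hΛr : Λr = (a₂ - a₁) / 2)
    (Aw A0 : ℂ) (hAw : Aw = (a₁ • c₁ + a₂ • c₂) / (c₁ + c₂)) (hA0 : A0 = Aw - (Λm : ℂ))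
    (amp E : ℝ) (hamp : amp = (‖A0‖ ^ 2 / Λr ^ 2 - 1) / 2)
    (hE : E = Real.exp (-(g ^ 2 * Λr ^ 2) / h ^ 2))
    (hnorm : (∫ x, ‖Ψ x‖ ^ 2) ≠ 0) :
    (∫ x, x * ‖Ψ x‖ ^ 2) / (∫ x, ‖Ψ x‖ ^ 2)
      = g * A0.re / (1 + amp * (1 - E)) + g * Λm := by
  have hΛr0 : Λr ≠ 0 := by
    rw [hΛr]
    exact div_ne_zero (sub_ne_zero.mpr ha.symm) two_ne_zero
  have hA : A0 * (c₁ + c₂) = Λr * (c₂ - c₁) := by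
    rw [hA0, hAw, hΛm, hΛr]
    exact sub_midpoint_mul_add_eq a₁ a₂ hc
  have hoverlap : Real.exp (-(g * a₁ - g * a₂) ^ 2 / (4 * h ^ 2)) = E := by
    rw [hE, hΛr]
    ring_nf
  have hD := norm_sq_add_mul_one_add_amp hΛr0 hA E
  rw [← hamp] at hD
  subst hΨ
  rw [integral_norm_sq_superposition hh.ne', hoverlap, ← hD] at hnorm ⊢
  rw [integral_mul_norm_sq_superposition hh.ne', hoverlap]
  have hq := right_ne_zero_of_mul hnorm
  rw [div_add' _ _ _ hq, div_eq_div_iff hnorm hq]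
  subst hΛm hΛr
  -- the numerator is `g Λm D + g Λr (‖c₂‖² - ‖c₁‖²)`, where `D = ‖c₁ + c₂‖² (1 + amp (1 - E))`
  linear_combination (-(g * (1 + amp * (1 - E)))) * re_mul_norm_sq_of_mul_add_eq hA
    - g * (1 + amp * (1 - E)) * ((a₁ + a₂) / 2) * hD
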